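/- arXiv:2510.01838 — 6 statements merged into one kernel-verified Lean document; each statement's English description precedes it below -/
import Mathlib

section
/- Let X : ℤ² → ℝ be a random field whose entries are independent and identically distributed with common law μ, and suppose μ has exponential tails, i.e. there exist constants c, C > 0 such that μ(ℝ∖[−x,x]) ≤ C e^{−cx} for all x ≥ 0. Then for every ε > 0 there exists 0 < ℓ₀(ε) < ∞ such that for every ℓ > ℓ₀(ε) and every finite subset A ⊂ ℤ², the probability P(∀u ∈ A, α(u) ≥ ℓ) ≤ ε^{|A|}, where |A| denotes the cardinality of A. -/
open MeasureTheory ProbabilityTheory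
open scoped ENNReal NNReal

/-- The field `α(u) = sup_{r ≥ 1} (X(u + r e₁) - X(u)) / r`, valued in `EReal`. -/
noncomputable def alphaE (X : ℤ × ℤ → ℝ) (u : ℤ × ℤ) : EReal :=
  ⨆ (r : ℕ) (_ : 1 ≤ r), (((X (u.1 + (r : ℤ), u.2) - X u) / (r : ℝ) : ℝ) : EReal)

/-- Orthogonal adjacency on `ℤ²`. -/
def orthAdj (u v : ℤ × ℤ) : Prop := |u.1 - v.1| + |u.2 - v.2| = 1

/-- `connIn S u v`: there is an orthogonally connected path from `u` to `v`
using only vertices of `S` (apart possibly from `u` itself if `u = v`). -/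
def connIn (S : Set (ℤ × ℤ)) (u v : ℤ × ℤ) : Prop :=
  Relation.ReflTransGen (fun a b => a ∈ S ∧ b ∈ S ∧ orthAdj a b) u v

/-- `S` presents an infinite orthogonally connected cluster. -/
def hasInfCluster (S : Set (ℤ × ℤ)) : Prop :=
  ∃ u ∈ S, {v | connIn S u v}.Infinite

/-! If `α(u) ≥ ℓ`, some increment `X(u + r e₁) - X(u)` exceeds `ℓ r / 2`, so `|X|` exceeds
`ℓ r / 4` at `u` or at `u + r e₁`: `u` leaves a *signal* at one of these sites, at horizontal
distance `d ∈ {0, r}` from `u`, with `|X| > ℓ (d + 1) / 8` there. Hence `|A|` is at most the total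
number of signals. Signals at one site come from distinct distances, so a site with `k` signals has
one from distance `d ≥ k - 1`; thus `e^{θ k} ≤ 1 + ∑ₐ e^{θ (dₐ + 1)} 1{|X| > ℓ (dₐ + 1) / 8}`, whose
mean is `1 + ∑ₐ C e^{-θ (dₐ + 1)}` for `θ = c ℓ / 16`. Summed over sites this is `O(C e^{-θ} |A|)`,
and the Chernoff bound gives `P ≤ (e^{-θ + O(C e^{-θ})})^{|A|}`, which is `≤ ε^{|A|}` for large `ℓ`.
-/

open Filter Topology

theorem Finset.exists_card_le_succ_of_injOn {ι : Type*} {T : Finset ι} {d : ι → ℕ}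
    (hd : Set.InjOn d T) (hT : T.Nonempty) : ∃ a ∈ T, T.card ≤ d a + 1 := by
  by_contra! h
  have hmaps : Set.MapsTo d T (Finset.range (T.card - 1)) := fun a ha =>
    Finset.mem_range.mpr (by have := h a ha; omega)
  have := Finset.card_le_card_of_injOn d hmaps hd
  simp only [Finset.card_range] at this
  have := hT.card_pos
  omega

theorem Real.exp_mul_card_le_one_add_sum {ι : Type*} {T : Finset ι} {d : ι → ℕ}
    (hd : Set.InjOn d T) {θ : ℝ} (hθ : 0 ≤ θ) :
    Real.exp (θ * T.card) ≤ 1 + ∑ a ∈ T, Real.exp (θ * (d a + 1)) := by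
  rcases T.eq_empty_or_nonempty with rfl | hT
  · simp
  obtain ⟨a, ha, hcard⟩ := Finset.exists_card_le_succ_of_injOn hd hT
  calc Real.exp (θ * T.card) ≤ Real.exp (θ * (d a + 1)) := by
        gcongr; exact_mod_cast hcard
    _ ≤ ∑ b ∈ T, Real.exp (θ * (d b + 1)) :=
        Finset.single_le_sum (f := fun b => Real.exp (θ * (d b + 1)))
          (fun b _ => (Real.exp_pos _).le) ha
    _ ≤ 1 + _ := le_add_of_nonneg_left zero_le_one

/-- Horizontal distance from `a` to `v`, meaningful when `a` lies weakly left of `v`. -/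
def rowDist (a v : ℤ × ℤ) : ℕ := (v.1 - a.1).toNat

def leftOf (A : Finset (ℤ × ℤ)) (v : ℤ × ℤ) : Finset (ℤ × ℤ) :=
  A.filter fun a => a.2 = v.2 ∧ a.1 ≤ v.1

noncomputable def signals (A : Finset (ℤ × ℤ)) (δ : ℝ) (v : ℤ × ℤ) (x : ℝ) : Finset (ℤ × ℤ) :=
  (leftOf A v).filter fun a => δ * (rowDist a v + 1) < |x|

def window (A : Finset (ℤ × ℤ)) (N : ℕ) : Finset (ℤ × ℤ) :=
  (A ×ˢ Finset.range (N + 1)).image fun p => (p.1.1 + p.2, p.1.2)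

theorem rowDist_injOn_leftOf (A : Finset (ℤ × ℤ)) (v : ℤ × ℤ) :
    Set.InjOn (rowDist · v) (leftOf A v) := by
  intro a ha b hb h
  simp only [leftOf, Finset.coe_filter, Set.mem_ofPred_eq, rowDist] at ha hb h
  exact Prod.ext (by omega) (ha.2.1.trans hb.2.1.symm)

theorem rowDist_injOn_right (a : ℤ × ℤ) :
    Set.InjOn (rowDist a) {v | a.2 = v.2 ∧ a.1 ≤ v.1} := by
  intro v hv w hw h
  simp only [Set.mem_ofPred_eq, rowDist] at hv hw h
  exact Prod.ext (by omega) (hv.1.symm.trans hw.1)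

theorem window_mono (A : Finset (ℤ × ℤ)) : Monotone (window A) := by
  intro N M hNM
  refine Finset.image_subset_image (Finset.product_subset_product_right ?_)
  exact Finset.range_subset_range.mpr (by omega)

theorem mem_window {A : Finset (ℤ × ℤ)} {u : ℤ × ℤ} (hu : u ∈ A) {r N : ℕ} (hr : r ≤ N) :
    (u.1 + r, u.2) ∈ window A N :=
  Finset.mem_image.mpr
    ⟨(u, r), Finset.mem_product.mpr ⟨hu, Finset.mem_range.mpr (by omega)⟩, rfl⟩

theorem sum_sum_leftOf_le (A S : Finset (ℤ × ℤ)) {f : ℕ → ℝ} (hf : ∀ d, 0 ≤ f d)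
    (hsum : Summable f) :
    ∑ v ∈ S, ∑ a ∈ leftOf A v, f (rowDist a v) ≤ A.card * ∑' d, f d := by
  simp only [leftOf, Finset.sum_filter]
  rw [Finset.sum_comm, ← nsmul_eq_mul, ← Finset.sum_const]
  refine Finset.sum_le_sum fun a _ => ?_
  rw [← Finset.sum_filter]
  refine (Finset.sum_image fun v hv w hw => ?_).symm.trans_le
    (hsum.sum_le_tsum _ fun d _ => hf d)
  exact rowDist_injOn_right a (Finset.mem_filter.mp hv).2 (Finset.mem_filter.mp hw).2

theorem measureReal_abs_gt_le {μ : Measure ℝ} {c C : ℝ} (hC : 0 ≤ C)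
    (htail : ∀ x : ℝ, 0 ≤ x → μ {y : ℝ | x < |y|} ≤ ENNReal.ofReal (C * Real.exp (-c * x)))
    {s : ℝ} (hs : 0 ≤ s) : μ.real {y : ℝ | s < |y|} ≤ C * Real.exp (-c * s) :=
  ENNReal.toReal_le_of_le_ofReal (by positivity) (htail s hs)

theorem measurable_card_signals (A : Finset (ℤ × ℤ)) (δ : ℝ) (v : ℤ × ℤ) :
    Measurable fun x : ℝ => ((signals A δ v x).card : ℝ) := by
  simp only [signals, Finset.card_filter]
  push_cast
  exact Finset.measurable_sum _ fun a _ =>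
    Measurable.ite (measurableSet_lt measurable_const measurable_abs) measurable_const
      measurable_const

theorem integral_exp_card_signals_le (μ : Measure ℝ) [IsProbabilityMeasure μ] {c C δ θ : ℝ}
    (hC : 0 ≤ C) (hδ : 0 ≤ δ) (hθ : 0 ≤ θ)
    (htail : ∀ x : ℝ, 0 ≤ x → μ {y : ℝ | x < |y|} ≤ ENNReal.ofReal (C * Real.exp (-c * x)))
    (A : Finset (ℤ × ℤ)) (v : ℤ × ℤ) :
    ∫ x, Real.exp (θ * (signals A δ v x).card) ∂μ ≤
      1 + ∑ a ∈ leftOf A v, C * Real.exp (θ - c * δ) ^ (rowDist a v + 1) := by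
  set t : ℤ × ℤ → ℝ := fun a => δ * (rowDist a v + 1)
  have ht : ∀ a, 0 ≤ t a := fun a => by positivity
  have hmeas : ∀ a, MeasurableSet {y : ℝ | t a < |y|} := fun a =>
    measurableSet_lt measurable_const measurable_abs
  set F : ℝ → ℝ := fun x => 1 + ∑ a ∈ leftOf A v,
    {y : ℝ | t a < |y|}.indicator (fun _ => Real.exp (θ * (rowDist a v + 1))) x
  have hpoint : ∀ x, Real.exp (θ * (signals A δ v x).card) ≤ F x := fun x => by
    refine (Real.exp_mul_card_le_one_add_sum ((rowDist_injOn_leftOf A v).mono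
      (Finset.filter_subset _ _)) hθ).trans_eq ?_
    simp only [F, Finset.sum_filter, Set.indicator_apply, Set.mem_ofPred_eq, t]
  have hind : ∀ a, Integrable
      ({y : ℝ | t a < |y|}.indicator fun _ => Real.exp (θ * (rowDist a v + 1))) μ := fun a =>
    (integrable_const _).indicator (hmeas a)
  have hFint : Integrable F μ := (integrable_const 1).add (integrable_finsetSum _ fun a _ => hind a)
  calc ∫ x, Real.exp (θ * (signals A δ v x).card) ∂μ
      ≤ ∫ x, F x ∂μ :=
        integral_mono_of_nonneg (.of_forall fun x => (Real.exp_pos _).le) hFint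
          (.of_forall hpoint)
    _ = 1 + ∑ a ∈ leftOf A v, μ.real {y : ℝ | t a < |y|} * Real.exp (θ * (rowDist a v + 1)) := by
        rw [integral_add (integrable_const 1) (integrable_finsetSum _ fun a _ => hind a),
          integral_finsetSum _ fun a _ => hind a]
        simp only [integral_const, probReal_univ, integral_indicator_const _ (hmeas _), smul_eq_mul,
          mul_one]
    _ ≤ 1 + ∑ a ∈ leftOf A v, C * Real.exp (-c * t a) * Real.exp (θ * (rowDist a v + 1)) := by
        gcongr with a
        exact measureReal_abs_gt_le hC htail (ht a)
    _ = 1 + ∑ a ∈ leftOf A v, C * Real.exp (θ - c * δ) ^ (rowDist a v + 1) := by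
        congr 1
        refine Finset.sum_congr rfl fun a _ => ?_
        rw [mul_assoc, ← Real.exp_add, ← Real.exp_nat_mul]
        simp only [t]
        push_cast
        ring_nf

theorem exists_lt_increment_of_lt_alphaE {x : ℤ × ℤ → ℝ} {u : ℤ × ℤ} {t : ℝ}
    (h : (t : EReal) < alphaE x u) : ∃ r : ℕ, 1 ≤ r ∧ t * r < x (u.1 + r, u.2) - x u := by
  obtain ⟨r, hr⟩ := lt_iSup_iff.mp h
  by_cases h1r : 1 ≤ r
  · rw [iSup_pos h1r, EReal.coe_lt_coe_iff, lt_div_iff₀ (by exact_mod_cast h1r)] at hr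
    exact ⟨r, h1r, hr⟩
  · rw [iSup_neg h1r] at hr
    exact absurd hr not_lt_bot

theorem exists_mem_signals {A : Finset (ℤ × ℤ)} {δ : ℝ} (hδ : 0 < δ) {x : ℤ × ℤ → ℝ}
    {u : ℤ × ℤ} (hu : u ∈ A) (h : ((4 * δ : ℝ) : EReal) < alphaE x u) :
    ∃ s : ℕ, u ∈ signals A δ (u.1 + s, u.2) (x (u.1 + s, u.2)) := by
  obtain ⟨r, hr1, hr⟩ := exists_lt_increment_of_lt_alphaE h
  have hr1' : (1 : ℝ) ≤ r := by exact_mod_cast hr1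
  have hends : 2 * δ * r < |x u| ∨ 2 * δ * r < |x (u.1 + r, u.2)| := by
    by_contra! h'
    linarith [neg_abs_le (x u), le_abs_self (x (u.1 + r, u.2))]
  simp only [signals, leftOf, Finset.mem_filter, rowDist]
  rcases hends with hlt | hlt
  · refine ⟨0, ⟨hu, trivial, by omega⟩, ?_⟩
    simp only [add_zero, sub_self, Int.toNat_zero, CharP.cast_eq_zero, zero_add, mul_one]
    nlinarith
  · refine ⟨r, ⟨hu, trivial, by omega⟩, ?_⟩
    simp only [add_sub_cancel_left, Int.toNat_natCast]
    nlinarith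

theorem card_le_sum_card_signals {A : Finset (ℤ × ℤ)} {δ : ℝ} (hδ : 0 < δ) {x : ℤ × ℤ → ℝ}
    (h : ∀ u ∈ A, ((4 * δ : ℝ) : EReal) < alphaE x u) :
    ∃ N : ℕ, A.card ≤ ∑ v ∈ window A N, (signals A δ v (x v)).card := by
  choose! s hs using fun u hu => exists_mem_signals hδ hu (h u hu)
  refine ⟨A.sup s, ?_⟩
  rw [Finset.card_eq_sum_card_fiberwise fun u hu => mem_window hu (Finset.le_sup hu)]
  refine Finset.sum_le_sum fun v _ => Finset.card_le_card fun u hu => ?_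
  obtain ⟨huA, rfl⟩ := Finset.mem_filter.mp hu
  exact hs u huA

theorem measureReal_sum_comp_ge_le {ι Ω : Type*} [MeasurableSpace Ω] {P : Measure Ω}
    [IsProbabilityMeasure P] {X : ι → Ω → ℝ} (hmeas : ∀ i, Measurable (X i))
    (hindep : iIndepFun X P) {μ : Measure ℝ} (hlaw : ∀ i, P.map (X i) = μ) {g : ι → ℝ → ℝ}
    (hg : ∀ i, Measurable (g i)) {θ : ℝ} (hθ : 0 ≤ θ)
    (hint : ∀ i, Integrable (fun x => Real.exp (θ * g i x)) μ) (S : Finset ι) (t : ℝ) :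
    P.real {ω | t ≤ ∑ i ∈ S, g i (X i ω)} ≤
      Real.exp (-θ * t) * ∏ i ∈ S, ∫ x, Real.exp (θ * g i x) ∂μ := by
  set Y : ι → Ω → ℝ := fun i => g i ∘ X i
  have hYmeas : ∀ i, Measurable (Y i) := fun i => (hg i).comp (hmeas i)
  have hYindep : iIndepFun Y P := hindep.comp g hg
  have hYint : ∀ i, Integrable (fun ω => Real.exp (θ * Y i ω)) P := fun i =>
    (hlaw i ▸ hint i).comp_measurable (hmeas i)
  have hmgf : ∀ i, mgf (Y i) P θ = ∫ x, Real.exp (θ * g i x) ∂μ := fun i => by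
    rw [mgf, ← hlaw i, integral_map (hmeas i).aemeasurable]
    · rfl
    · exact (hlaw i ▸ hint i).aestronglyMeasurable
  have h := measure_ge_le_exp_mul_mgf t hθ
    (hYindep.integrable_exp_mul_sum hYmeas fun i _ => hYint i) (X := ∑ i ∈ S, Y i)
  rw [hYindep.mgf_sum hYmeas] at h
  simpa only [Finset.sum_apply, hmgf, Y, Function.comp_apply] using h

theorem integrable_exp_mul_card_signals (μ : Measure ℝ) [IsFiniteMeasure μ] {θ : ℝ} (hθ : 0 ≤ θ)
    (A : Finset (ℤ × ℤ)) (δ : ℝ) (v : ℤ × ℤ) :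
    Integrable (fun x => Real.exp (θ * (signals A δ v x).card)) μ :=
  .of_mem_Icc 0 (Real.exp (θ * A.card))
    (Real.measurable_exp.comp ((measurable_card_signals A δ v).const_mul θ)).aemeasurable
    (.of_forall fun x => ⟨(Real.exp_pos _).le, Real.exp_le_exp.mpr (by
      gcongr; exact (Finset.filter_subset _ _).trans (Finset.filter_subset _ _))⟩)

theorem measure_card_le_sum_card_signals_le {Ω : Type*} [MeasurableSpace Ω] {P : Measure Ω}
    [IsProbabilityMeasure P] {X : ℤ × ℤ → Ω → ℝ} (hmeas : ∀ u, Measurable (X u))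
    (hindep : iIndepFun X P) {μ : Measure ℝ} [IsProbabilityMeasure μ]
    (hlaw : ∀ u, P.map (X u) = μ) {c C : ℝ} (hC : 0 ≤ C)
    (htail : ∀ x : ℝ, 0 ≤ x → μ {y : ℝ | x < |y|} ≤ ENNReal.ofReal (C * Real.exp (-c * x)))
    {δ θ : ℝ} (hδ : 0 ≤ δ) (hθ : 0 < θ) (hcδ : c * δ = 2 * θ) (A S : Finset (ℤ × ℤ)) :
    P {ω | (A.card : ℝ) ≤ ∑ v ∈ S, ((signals A δ v (X v ω)).card : ℝ)} ≤
      ENNReal.ofReal (Real.exp (-θ + C * Real.exp (-θ) * (1 - Real.exp (-θ))⁻¹) ^ A.card) := by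
  set r := Real.exp (-θ)
  set n := A.card
  have hgeom : HasSum (fun d : ℕ => C * r ^ (d + 1)) (C * r * (1 - r)⁻¹) := by
    simpa only [pow_succ', ← mul_assoc] using (hasSum_geometric_of_lt_one (Real.exp_pos _).le
      (Real.exp_lt_one_iff.mpr (by linarith))).mul_left (C * r)
  have hsite : ∀ v, ∫ x, Real.exp (θ * (signals A δ v x).card) ∂μ ≤
      1 + ∑ a ∈ leftOf A v, C * r ^ (rowDist a v + 1) := fun v => by
    have hexp : θ - c * δ = -θ := by linarith
    simpa only [hexp] using integral_exp_card_signals_le μ hC hδ hθ.le htail A v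
  rw [← ofReal_measureReal]
  refine ENNReal.ofReal_le_ofReal ?_
  calc _ ≤ Real.exp (-θ * n) * ∏ v ∈ S, ∫ x, Real.exp (θ * (signals A δ v x).card) ∂μ :=
        measureReal_sum_comp_ge_le hmeas hindep hlaw (measurable_card_signals A δ) hθ.le
          (integrable_exp_mul_card_signals μ hθ.le A δ) _ _
    _ ≤ Real.exp (-θ * n) * ∏ v ∈ S, (1 + ∑ a ∈ leftOf A v, C * r ^ (rowDist a v + 1)) := by
        gcongr with v
        exact hsite v
    _ ≤ Real.exp (-θ * n) * Real.exp (∑ v ∈ S, ∑ a ∈ leftOf A v, C * r ^ (rowDist a v + 1)) := by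
        gcongr
        exact Real.prod_one_add_le_exp_sum _ fun v => Finset.sum_nonneg fun a _ => by positivity
    _ ≤ Real.exp (-θ * n) * Real.exp (n * (C * r * (1 - r)⁻¹)) := by
        gcongr
        rw [← hgeom.tsum_eq]
        exact sum_sum_leftOf_le A S (fun d => by positivity) hgeom.summable
    _ = Real.exp (-θ + C * r * (1 - r)⁻¹) ^ n := by
        rw [← Real.exp_add, ← Real.exp_nat_mul]
        ring_nf

theorem measure_forall_le_alphaE_le {Ω : Type*} [MeasurableSpace Ω] {P : Measure Ω}
    [IsProbabilityMeasure P] {X : ℤ × ℤ → Ω → ℝ} (hmeas : ∀ u, Measurable (X u))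
    (hindep : iIndepFun X P) {μ : Measure ℝ} [IsProbabilityMeasure μ]
    (hlaw : ∀ u, P.map (X u) = μ) {c C : ℝ} (hC : 0 ≤ C)
    (htail : ∀ x : ℝ, 0 ≤ x → μ {y : ℝ | x < |y|} ≤ ENNReal.ofReal (C * Real.exp (-c * x)))
    {ℓ θ : ℝ} (hℓ : 0 < ℓ) (hθ : 0 < θ) (hcℓ : c * ℓ = 16 * θ) (A : Finset (ℤ × ℤ)) :
    P {ω | ∀ u ∈ A, (ℓ : EReal) ≤ alphaE (fun v => X v ω) u} ≤
      ENNReal.ofReal (Real.exp (-θ + C * Real.exp (-θ) * (1 - Real.exp (-θ))⁻¹) ^ A.card) := by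
  set E : ℕ → Set Ω := fun N =>
    {ω | (A.card : ℝ) ≤ ∑ v ∈ window A N, ((signals A (ℓ / 8) v (X v ω)).card : ℝ)}
  have hsub : {ω | ∀ u ∈ A, (ℓ : EReal) ≤ alphaE (fun v => X v ω) u} ⊆ ⋃ N, E N := by
    intro ω hω
    have h4δ : ∀ u ∈ A, ((4 * (ℓ / 8) : ℝ) : EReal) < alphaE (fun v => X v ω) u := fun u hu =>
      lt_of_lt_of_le (EReal.coe_lt_coe_iff.mpr (by linarith)) (hω u hu)
    obtain ⟨N, hN⟩ := card_le_sum_card_signals (by positivity) h4δ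
    exact Set.mem_iUnion.mpr ⟨N, by simp only [E, Set.mem_ofPred_eq]; exact_mod_cast hN⟩
  have hmono : Monotone E := fun N M hNM ω (hω : (A.card : ℝ) ≤ _) =>
    hω.trans (Finset.sum_le_sum_of_subset_of_nonneg (window_mono A hNM) fun _ _ _ => by positivity)
  calc _ ≤ P (⋃ N, E N) := measure_mono hsub
    _ = ⨆ N, P (E N) := hmono.measure_iUnion
    _ ≤ _ := iSup_le fun N => measure_card_le_sum_card_signals_le hmeas hindep hlaw hC htail
      (by positivity) hθ (by linarith) A (window A N)

theorem eventually_exp_neg_add_geometric_le (C : ℝ) {ε : ℝ} (hε : 0 < ε) :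
    ∀ᶠ θ in atTop,
      Real.exp (-θ + C * Real.exp (-θ) * (1 - Real.exp (-θ))⁻¹) ≤ ε := by
  have h0 := Real.tendsto_exp_neg_atTop_nhds_zero
  have h1 : Tendsto (fun θ => C * Real.exp (-θ) * (1 - Real.exp (-θ))⁻¹) atTop
      (𝓝 (C * 0 * (1 - 0)⁻¹)) :=
    (h0.const_mul C).mul ((tendsto_const_nhds.sub h0).inv₀ (by norm_num))
  have h2 := Real.tendsto_exp_atBot.comp (tendsto_neg_atTop_atBot.atBot_add h1)
  exact h2.eventually (eventually_le_nhds hε)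

theorem statement2
    {Ω : Type} [MeasurableSpace Ω] (P : Measure Ω) [IsProbabilityMeasure P]
    (X : ℤ × ℤ → Ω → ℝ) (μ : Measure ℝ) [IsProbabilityMeasure μ]
    (hmeas : ∀ u, Measurable (X u))
    (hindep : iIndepFun X P)
    (hlaw : ∀ u, Measure.map (X u) P = μ)
    (htail : ∃ c C : ℝ, 0 < c ∧ 0 < C ∧ ∀ x : ℝ, 0 ≤ x →
      μ {y : ℝ | x < |y|} ≤ ENNReal.ofReal (C * Real.exp (-c * x))) :
    ∀ ε : ℝ, 0 < ε → ∃ ℓ₀ : ℝ, 0 < ℓ₀ ∧ ∀ ℓ : ℝ, ℓ₀ < ℓ →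
      ∀ A : Finset (ℤ × ℤ),
        P {ω | ∀ u ∈ A, (ℓ : EReal) ≤ alphaE (fun v => X v ω) u} ≤
          ENNReal.ofReal (ε ^ A.card) := by
  obtain ⟨c, C, hc, hC, htail⟩ := htail
  intro ε hε
  obtain ⟨ℓ₁, hℓ₁⟩ := eventually_atTop.mp
    ((tendsto_id.const_mul_atTop (by positivity : 0 < c / 16)).eventually
      (eventually_exp_neg_add_geometric_le C hε))
  refine ⟨max ℓ₁ 1, by positivity, fun ℓ hℓ A => ?_⟩
  have hℓ0 : 0 < ℓ := by linarith [le_max_right ℓ₁ 1]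
  refine (measure_forall_le_alphaE_le hmeas hindep hlaw hC.le htail hℓ0
    (θ := c / 16 * ℓ) (by positivity) (by ring) A).trans ?_
  exact ENNReal.ofReal_le_ofReal (pow_le_pow_left₀ (Real.exp_pos _).le
    (hℓ₁ ℓ (by linarith [le_max_left ℓ₁ 1])) _)
end

section
/- Let Y : ℤ → ℝ and ℓ ∈ ℝ, and suppose that for every i ∈ ℤ the set M_ℓ(i) := {Y(j) − (j−i)ℓ : j > i} admits a maximum; let T_ℓ(i) be the smallest index > i achieving this maximum. Let i < j be two integers such that there exists k > i with i ≺_ℓ k and there exists k' > j with j ≺_ℓ k' (i.e. α(i) > ℓ and α(j) > ℓ). If it is not the case that i ≺_ℓ T_ℓ(j), then i < T_ℓ(i) < j. -/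
/-!
If `T_ℓ(i) ≥ j`, then `i ≺_ℓ T_ℓ(i)` (a maximiser beats any witness of `α(i) > ℓ`), and this
shadow passes to `T_ℓ(j)`: either `T_ℓ(i) = j` and `≺_ℓ` is transitive, or `T_ℓ(i) > j` lies in
the range of `M_ℓ(j)`, whose maximiser `T_ℓ(j)` then also beats it as seen from `i`, since moving
the base point from `j` to `i` shifts every element of `M_ℓ(j)` by the same constant.
-/

/-- `precRel ℓ Y i j` : `i ≺_ℓ j`, i.e. `i < j` and `Y j > Y i + (j - i) ℓ`
(the mountain at `j` casts a shadow of slope `ℓ` on `i`). -/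
def precRel (ℓ : ℝ) (Y : ℤ → ℝ) (i j : ℤ) : Prop :=
  i < j ∧ Y i + ((j - i : ℤ) : ℝ) * ℓ < Y j

/-- `isTl ℓ Y i t` : `t = T_ℓ(i)`, the smallest `j > i` realizing the maximum of
`M_ℓ(i) = {Y j - (j - i) ℓ : j > i}`. -/
def isTl (ℓ : ℝ) (Y : ℤ → ℝ) (i t : ℤ) : Prop :=
  i < t ∧ (∀ k : ℤ, i < k → Y k - ((k - i : ℤ) : ℝ) * ℓ ≤ Y t - ((t - i : ℤ) : ℝ) * ℓ) ∧
    ∀ j : ℤ, i < j → (∀ k : ℤ, i < k → Y k - ((k - i : ℤ) : ℝ) * ℓ ≤ Y j - ((j - i : ℤ) : ℝ) * ℓ)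
      → t ≤ j

section

variable {ℓ : ℝ} {Y : ℤ → ℝ}

theorem precRel_trans {i j k : ℤ} (hij : precRel ℓ Y i j) (hjk : precRel ℓ Y j k) :
    precRel ℓ Y i k := by
  obtain ⟨hij, hYij⟩ := hij
  obtain ⟨hjk, hYjk⟩ := hjk
  refine ⟨hij.trans hjk, ?_⟩
  push_cast at hYij hYjk ⊢
  linarith

theorem isTl.precRel_of_lt {i j t k : ℤ} (ht : isTl ℓ Y j t) (hij : i < j) (hjk : j < k)
    (hik : precRel ℓ Y i k) : precRel ℓ Y i t := by
  obtain ⟨hjt, hmax, -⟩ := ht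
  obtain ⟨-, hYik⟩ := hik
  have hkt := hmax k hjk
  refine ⟨hij.trans hjt, ?_⟩
  push_cast at hYik hkt ⊢
  linarith

theorem isTl.precRel {i t k : ℤ} (ht : isTl ℓ Y i t) (hik : precRel ℓ Y i k) :
    precRel ℓ Y i t := by
  obtain ⟨hit, hmax, -⟩ := ht
  obtain ⟨hik, hYik⟩ := hik
  have hkt := hmax k hik
  refine ⟨hit, ?_⟩
  push_cast at hYik hkt ⊢
  linarith

end

theorem statement8 (Y : ℤ → ℝ) (ℓ : ℝ) (T : ℤ → ℤ) (hT : ∀ i : ℤ, isTl ℓ Y i (T i))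
    (i j : ℤ) (hij : i < j)
    (hi : ∃ k : ℤ, precRel ℓ Y i k) (hj : ∃ k' : ℤ, precRel ℓ Y j k')
    (hnot : ¬ precRel ℓ Y i (T j)) :
    i < T i ∧ T i < j := by
  obtain ⟨k, hik⟩ := hi
  obtain ⟨k', hjk'⟩ := hj
  have hiTi : precRel ℓ Y i (T i) := (hT i).precRel hik
  refine ⟨hiTi.1, lt_of_not_ge fun hjTi => hnot ?_⟩
  rcases hjTi.eq_or_lt with hjTi | hjTi
  · exact precRel_trans (hjTi ▸ hiTi) ((hT j).precRel hjk')
  · exact (hT j).precRel_of_lt hij hjTi hiTi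
end

section
/- Let (Y_i)_{i∈ℤ} be independent and identically distributed real random variables whose common law μ admits a density with respect to Lebesgue measure on ℝ. Then for every ε > 0 there exist n₀ ∈ ℕ* and h₀ > 0 (depending on ε) such that for all h ≤ h₀, P(Y₁ >_h Y₂ >_h ⋯ >_h Y_{n₀}) ≤ ε^{2n₀}. -/
/-!
As `h ↓ 0` the events `Y₁ >_h Y₂ >_h ⋯ >_h Yₙ` decrease to `Y₁ ≥ Y₂ ≥ ⋯ ≥ Yₙ`. Since `μ` has no
atoms, ties have probability zero, so this limit event is almost surely the event that
`(Y₁, …, Yₙ)` is strictly decreasing; by exchangeability it is one of `n!` disjoint events of equal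
probability, so its probability is at most `1 / n!`. Choose `n` with `1 / n! < ε ^ (2n)`, then `h₀`
by continuity from above.
-/

open MeasureTheory ProbabilityTheory Filter
open scoped ENNReal

lemma MeasureTheory.Measure.prod_diagonal_eq_zero {α : Type*} [MeasurableSpace α]
    [MeasurableEq α] (μ ν : Measure α) [SFinite ν] [NullSingletonClass ν] :
    μ.prod ν (Set.diagonal α) = 0 := by
  rw [Measure.prod_apply measurableSet_diagonal]
  simp [Set.preimage]

section Pi

variable {ι α : Type*} [Fintype ι] [MeasurableSpace α] (μ : Measure α)

lemma MeasureTheory.Measure.pi_setOf_apply_eq_apply [MeasurableEq α] [IsProbabilityMeasure μ]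
    [NullSingletonClass μ] {i j : ι} (hij : i ≠ j) :
    Measure.pi (fun _ : ι => μ) {y | y i = y j} = 0 := by
  have hindep : IndepFun (fun y : ι → α => y i) (fun y => y j) (Measure.pi fun _ => μ) :=
    (iIndepFun_pi (X := fun _ => id) fun _ => aemeasurable_id).indepFun hij
  rw [indepFun_iff_map_prod_eq_prod_map_map (measurable_pi_apply i).aemeasurable
    (measurable_pi_apply j).aemeasurable, (measurePreserving_eval _ i).map_eq,
    (measurePreserving_eval _ j).map_eq] at hindep
  rw [← Measure.prod_diagonal_eq_zero μ μ, ← hindep,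
    Measure.map_apply (by fun_prop) measurableSet_diagonal]
  rfl

lemma MeasureTheory.Measure.measurePreserving_comp_perm [SigmaFinite μ] (σ : Equiv.Perm ι) :
    MeasurePreserving (fun y : ι → α => y ∘ σ)
      (Measure.pi fun _ => μ) (Measure.pi fun _ => μ) := by
  convert measurePreserving_piCongrLeft (fun _ : ι => μ) σ.symm using 1
  ext y i
  simp [MeasurableEquiv.piCongrLeft, Equiv.piCongrLeft]

end Pi

lemma Equiv.Perm.eq_of_strictAnti_comp {n : ℕ} {α : Type*} [LinearOrder α] {y : Fin n → α}
    {σ τ : Equiv.Perm (Fin n)} (hσ : StrictAnti (y ∘ σ)) (hτ : StrictAnti (y ∘ τ)) : σ = τ := by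
  have hy : Function.Injective y := by
    simpa [Function.comp_assoc] using hσ.injective.comp σ.symm.injective
  have hrange : Set.range (y ∘ σ) = Set.range (y ∘ τ) := by
    rw [Set.range_comp, Set.range_comp, σ.surjective.range_eq, τ.surjective.range_eq]
  exact Equiv.ext fun k => hy (congrFun ((hσ.range_inj hτ).1 hrange) k)

lemma measurableSet_setOf_strictAnti {ι : Type*} [Preorder ι] [Countable ι] :
    MeasurableSet {y : ι → ℝ | StrictAnti y} := by
  simp only [StrictAnti, Set.ofPred_forall]
  exact .iInter fun i => .iInter fun j => .iInter fun _ =>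
    measurableSet_lt (measurable_pi_apply j) (measurable_pi_apply i)

section Antitone

variable {n : ℕ} (μ : Measure ℝ) [IsProbabilityMeasure μ]

lemma factorial_mul_pi_setOf_strictAnti_le :
    (n.factorial : ℝ≥0∞) * Measure.pi (fun _ : Fin n => μ) {y | StrictAnti y} ≤ 1 := by
  set ν := Measure.pi fun _ : Fin n => μ
  set E : Equiv.Perm (Fin n) → Set (Fin n → ℝ) := fun σ => (· ∘ σ) ⁻¹' {y | StrictAnti y}
  have hE : ∀ σ, ν (E σ) = ν {y | StrictAnti y} := fun σ =>
    (Measure.measurePreserving_comp_perm μ σ).measure_preimage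
      measurableSet_setOf_strictAnti.nullMeasurableSet
  have hdisj : Pairwise (Function.onFun Disjoint E) := fun σ τ hne =>
    Set.disjoint_left.2 fun _ hσ hτ => hne (Equiv.Perm.eq_of_strictAnti_comp hσ hτ)
  have hmeas : ∀ σ, MeasurableSet (E σ) := fun σ =>
    (Measure.measurePreserving_comp_perm μ σ).measurable measurableSet_setOf_strictAnti
  calc (n.factorial : ℝ≥0∞) * ν {y | StrictAnti y} = ∑ σ, ν (E σ) := by
        simp [hE, Fintype.card_perm]
    _ = ν (⋃ σ, E σ) := by rw [measure_iUnion hdisj hmeas, tsum_fintype]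
    _ ≤ 1 := prob_le_one

lemma pi_setOf_antitone_le_inv_factorial [NullSingletonClass μ] :
    Measure.pi (fun _ : Fin n => μ) {y | Antitone y} ≤ (n.factorial : ℝ≥0∞)⁻¹ := by
  set ν := Measure.pi fun _ : Fin n => μ
  set T := ⋃ (i) (j) (_ : i ≠ j), {y : Fin n → ℝ | y i = y j}
  have hsub : {y : Fin n → ℝ | Antitone y} ⊆ {y | StrictAnti y} ∪ T := by
    intro y hy
    by_cases hinj : Function.Injective y
    · exact Or.inl (hy.strictAnti_of_injective hinj)
    · obtain ⟨i, j, hij, hne⟩ := Function.not_injective_iff.1 hinj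
      exact Or.inr (Set.mem_iUnion₂.2 ⟨i, j, Set.mem_iUnion.2 ⟨hne, hij⟩⟩)
  have hties : ν T = 0 :=
    measure_iUnion_null fun i => measure_iUnion_null fun j => measure_iUnion_null fun hij =>
      Measure.pi_setOf_apply_eq_apply μ hij
  rw [ENNReal.le_inv_iff_mul_le, mul_comm]
  calc (n.factorial : ℝ≥0∞) * ν {y | Antitone y}
      ≤ n.factorial * (ν {y | StrictAnti y} + ν T) :=
        mul_le_mul_right (measure_union_le _ _ |>.trans' (measure_mono hsub)) _
    _ ≤ 1 := by rw [hties, add_zero]; exact factorial_mul_pi_setOf_strictAnti_le μ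

end Antitone

/-- The event `y₀ >_h y₁ >_h ⋯ >_h yₘ`. -/
def chainSet (m : ℕ) (h : ℝ) : Set (Fin (m + 1) → ℝ) :=
  {y | ∀ i : Fin m, y i.succ < y i.castSucc + h}

lemma measurableSet_chainSet (m : ℕ) (h : ℝ) : MeasurableSet (chainSet m h) := by
  simp only [chainSet, Set.ofPred_forall]
  exact .iInter fun i => measurableSet_lt (measurable_pi_apply _) (by fun_prop)

lemma chainSet_mono (m : ℕ) : Monotone (chainSet m) :=
  fun _ _ hle _ hy i => (hy i).trans_le (by linarith)

lemma biInter_chainSet (m : ℕ) : ⋂ h > 0, chainSet m h = {y | Antitone y} := by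
  ext y
  simp only [Set.mem_iInter, chainSet, Set.mem_ofPred_eq, Fin.antitone_iff_succ_le]
  exact ⟨fun hy i => le_of_forall_pos_lt_add fun h hh => hy h hh i,
    fun hy h hh i => (hy i).trans_lt (lt_add_of_pos_right _ hh)⟩

lemma exists_pos_forall_measure_chainSet_lt {m : ℕ} (ν : Measure (Fin (m + 1) → ℝ))
    [IsFiniteMeasure ν] {c : ℝ≥0∞} (hc : ν {y | Antitone y} < c) :
    ∃ h₀ > 0, ∀ h ≤ h₀, ν (chainSet m h) < c := by
  have hlim := tendsto_measure_biInter_gt (μ := ν) (a := (0 : ℝ))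
    (fun h _ => (measurableSet_chainSet m h).nullMeasurableSet)
    (fun _ _ _ hij => chainSet_mono m hij) ⟨1, one_pos, measure_ne_top _ _⟩
  rw [biInter_chainSet] at hlim
  obtain ⟨h₀, hlt, hh₀⟩ := ((hlim.eventually_lt_const hc).and self_mem_nhdsWithin).exists
  exact ⟨h₀, hh₀, fun h hh => (measure_mono (chainSet_mono m hh)).trans_lt hlt⟩

lemma ProbabilityTheory.iIndepFun.map_comp_eq_pi {Ω ι κ β : Type*} [MeasurableSpace Ω]
    [MeasurableSpace β] {P : Measure Ω} [IsProbabilityMeasure P] [Fintype κ] {Y : ι → Ω → β}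
    {μ : Measure β}
    (hindep : iIndepFun Y P) (hmeas : ∀ i, Measurable (Y i))
    (hlaw : ∀ i, P.map (Y i) = μ) {g : κ → ι} (hg : Function.Injective g) :
    P.map (fun ω k => Y (g k) ω) = Measure.pi fun _ => μ := by
  rw [(iIndepFun_iff_map_fun_eq_pi_map fun k => (hmeas (g k)).aemeasurable).1
    (hindep.precomp hg)]
  simp only [hlaw]

lemma exists_inv_factorial_lt_pow {ε : ℝ} (hε : 0 < ε) :
    ∃ m : ℕ, ((m + 1).factorial : ℝ)⁻¹ < ε ^ (2 * (m + 1)) := by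
  obtain ⟨N, hN⟩ := eventually_atTop.1 <|
    (FloorSemiring.tendsto_pow_div_factorial_atTop (ε ^ 2)⁻¹).eventually_lt_const one_pos
  refine ⟨N, ?_⟩
  have h := hN (N + 1) N.le_succ
  rw [div_lt_one (by positivity), inv_pow] at h
  rw [pow_mul]
  exact (inv_lt_comm₀ (by positivity) (by positivity)).1 h

lemma setOf_chain_eq_preimage_chainSet {Ω : Type*} (Y : ℤ → Ω → ℝ) (m : ℕ) (h : ℝ) :
    {ω | ∀ i : ℤ, 1 ≤ i → i < ((m + 1 : ℕ) : ℤ) → Y (i + 1) ω < Y i ω + h} =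
      (fun ω (k : Fin (m + 1)) => Y (k + 1) ω) ⁻¹' chainSet m h := by
  ext ω
  simp only [chainSet, Set.mem_ofPred_eq, Set.mem_preimage, Fin.val_succ, Fin.val_castSucc]
  constructor
  · intro hω i
    simpa using hω (i + 1) (by omega) (by omega)
  · intro hω i hi₁ hi₂
    obtain ⟨k, rfl⟩ : ∃ k : ℕ, i = k + 1 := ⟨(i - 1).toNat, by omega⟩
    simpa using hω ⟨k, by omega⟩

theorem statement11
    {Ω : Type} [MeasurableSpace Ω] (P : Measure Ω) [IsProbabilityMeasure P]
    (Y : ℤ → Ω → ℝ) (μ : Measure ℝ) [IsProbabilityMeasure μ]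
    (hmeas : ∀ i, Measurable (Y i))
    (hindep : iIndepFun Y P)
    (hlaw : ∀ i, Measure.map (Y i) P = μ)
    (hdens : ∃ φ : ℝ → ℝ≥0∞, Measurable φ ∧ μ = (volume : Measure ℝ).withDensity φ) :
    ∀ ε : ℝ, 0 < ε → ∃ n₀ : ℕ, 1 ≤ n₀ ∧ ∃ h₀ : ℝ, 0 < h₀ ∧ ∀ h : ℝ, h ≤ h₀ →
      P {ω | ∀ i : ℤ, 1 ≤ i → i < (n₀ : ℤ) → Y (i + 1) ω < Y i ω + h} ≤
        ENNReal.ofReal (ε ^ (2 * n₀)) := by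
  intro ε hε
  obtain ⟨φ, -, rfl⟩ := hdens
  obtain ⟨m, hm⟩ := exists_inv_factorial_lt_pow hε
  have hlt : Measure.pi (fun _ : Fin (m + 1) => volume.withDensity φ) {y | Antitone y} <
      ENNReal.ofReal (ε ^ (2 * (m + 1))) := by
    refine (pi_setOf_antitone_le_inv_factorial _).trans_lt ?_
    rwa [← ENNReal.ofReal_natCast, ← ENNReal.ofReal_inv_of_pos (by positivity),
      ENNReal.ofReal_lt_ofReal_iff (by positivity)]
  obtain ⟨h₀, hh₀, hchain⟩ := exists_pos_forall_measure_chainSet_lt _ hlt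
  refine ⟨m + 1, by omega, h₀, hh₀, fun h hh => ?_⟩
  have hshift : Function.Injective fun k : Fin (m + 1) => (k : ℤ) + 1 :=
    fun _ _ hk => Fin.ext (by simpa using hk)
  rw [setOf_chain_eq_preimage_chainSet, ← Measure.map_apply (by fun_prop)
    (measurableSet_chainSet m h), hindep.map_comp_eq_pi hmeas hlaw hshift]
  exact (hchain h hh).le
end

section
/- Let X : ℤ² → ℝ be a random field whose entries are independent and identically distributed with common law μ, and suppose μ has a finite first moment, ∫ℝ |x| μ(dx) < ∞. Fix j ∈ ℤ. Then almost surely, for every u ∈ ℤ the set M(u) := {v ∈ ℤ : v > u and α_j(u) = (X(v,j) − X(u,j))/(v − u)} is non-empty; in particular the supremum defining α_j(u) is attained and M(u) admits a minimum T(u). -/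
/-!
Fix `u` and put `Y r = X (u + r, j)`. By the strong law of large numbers `Y r / r → 0` almost
surely, so the slopes `(Y r - Y 0) / r` tend to `0`, and a sequence tending to `0` attains its
supremum as soon as one of its terms is nonnegative. Such a term exists almost surely: by
exchangeability, `Y 0` is the strict maximum of `Y 0, …, Y n` with probability at most `1 / (n + 1)`.
-/

open MeasureTheory ProbabilityTheory
open scoped ENNReal

/-- The restriction to the line `ℤ × {j}` of the field `α`:
`α_j(u) = sup_{r ≥ 1} (X(u + r, j) - X(u, j)) / r`, valued in `EReal`. -/
noncomputable def alphaJ (X : ℤ × ℤ → ℝ) (j u : ℤ) : EReal :=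
  ⨆ (r : ℕ) (_ : 1 ≤ r), (((X (u + (r : ℤ), j) - X (u, j)) / (r : ℝ) : ℝ) : EReal)

/-- The slope `τ_j(u,v) = (X(v,j) - X(u,j)) / (v - u)` for `u < v`. -/
noncomputable def tauJ (X : ℤ × ℤ → ℝ) (j u v : ℤ) : ℝ :=
  (X (v, j) - X (u, j)) / ((v - u : ℤ) : ℝ)

/-- `M(u)` (for the row `j`): the set of `v > u` at which the supremum
defining `α_j(u)` is attained. -/
def Mset (X : ℤ × ℤ → ℝ) (j u : ℤ) : Set ℤ :=
  {v : ℤ | u < v ∧ alphaJ X j u = ((tauJ X j u v : ℝ) : EReal)}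

open Filter Finset Function
open scoped Topology

lemma exists_mem_forall_ge_of_tendsto {α β : Type*} [LinearOrder β] [TopologicalSpace β]
    [OrderTopology β] {f : α → β} {a : β} {s : Set α} (hf : Tendsto f cofinite (𝓝 a))
    (h : ∃ x ∈ s, a ≤ f x) : ∃ x ∈ s, ∀ y ∈ s, f y ≤ f x := by
  by_cases! habove : ∃ x₁ ∈ s, a < f x₁
  · obtain ⟨x₁, hx₁s, hx₁⟩ := habove
    have hfin : {y | f x₁ ≤ f y}.Finite := by
      simpa only [not_lt] using eventually_cofinite.mp (hf.eventually (gt_mem_nhds hx₁))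
    obtain ⟨x, ⟨hxs, -⟩, hmax⟩ :=
      Set.exists_max_image _ f (hfin.inter_of_right s) ⟨x₁, hx₁s, le_rfl⟩
    refine ⟨x, hxs, fun y hys => ?_⟩
    rcases le_or_gt (f x₁) (f y) with hy | hy
    · exact hmax y ⟨hys, hy⟩
    · exact hy.le.trans (hmax x₁ ⟨hx₁s, le_rfl⟩)
  · obtain ⟨x, hxs, hx⟩ := h
    exact ⟨x, hxs, fun y hys => (habove y hys).trans hx⟩

lemma Mset_nonempty_of_tendsto (X : ℤ × ℤ → ℝ) (j u : ℤ)
    (hlim : Tendsto (fun r : ℕ => X (u + r, j) / r) atTop (𝓝 0))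
    (hge : ∃ r : ℕ, 1 ≤ r ∧ X (u, j) ≤ X (u + r, j)) :
    (Mset X j u).Nonempty := by
  set slope : ℕ → ℝ := fun r => (X (u + r, j) - X (u, j)) / r
  have hslope : Tendsto slope cofinite (𝓝 0) := by
    rw [Nat.cofinite_eq_atTop]
    simpa only [slope, sub_div, sub_zero] using
      hlim.sub (tendsto_const_div_atTop_nhds_zero_nat (X (u, j)))
  obtain ⟨r, hr, hmax⟩ := exists_mem_forall_ge_of_tendsto (s := {r | 1 ≤ r}) hslope
    (hge.imp fun r ⟨hr, hle⟩ => ⟨hr, div_nonneg (sub_nonneg.2 hle) r.cast_nonneg⟩)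
  have htau : tauJ X j u (u + r) = slope r := by
    simp only [tauJ, slope, add_sub_cancel_left, Int.cast_natCast]
  refine ⟨u + r, by simp only [Set.mem_ofPred_eq] at hr; omega, ?_⟩
  rw [htau]
  exact le_antisymm (iSup₂_le fun s hs => EReal.coe_le_coe_iff.2 (hmax s hs))
    (le_iSup₂ (f := fun (s : ℕ) (_ : 1 ≤ s) => ((slope s : ℝ) : EReal)) r hr)

lemma tendsto_div_natCast_of_tendsto_sum_div {x : ℕ → ℝ} {m : ℝ}
    (h : Tendsto (fun n : ℕ => (∑ i ∈ range n, x i) / n) atTop (𝓝 m)) :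
    Tendsto (fun n : ℕ => x n / n) atTop (𝓝 0) := by
  have hshift : Tendsto (fun n : ℕ => (∑ i ∈ range (n + 1), x i) / (n + 1 : ℝ)) atTop (𝓝 m) := by
    simpa only [comp_def, Nat.cast_succ] using h.comp (tendsto_add_atTop_nat 1)
  have hratio : Tendsto (fun n : ℕ => ((n : ℝ) / (n + 1))⁻¹) atTop (𝓝 1) := by
    simpa using (tendsto_natCast_div_add_atTop (1 : ℝ)).inv₀ one_ne_zero
  have hdiff := (hshift.mul hratio).sub h
  rw [mul_one, sub_self] at hdiff
  refine hdiff.congr' ((eventually_ne_atTop 0).mono fun n hn => ?_)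
  have hn : (n : ℝ) ≠ 0 := Nat.cast_ne_zero.2 hn
  rw [sum_range_succ]
  field_simp
  ring

section Probability

variable {Ω : Type*} [MeasurableSpace Ω] {P : Measure Ω}

lemma ae_tendsto_div_natCast_of_identDistrib {Y : ℕ → Ω → ℝ} (hint : Integrable (Y 0) P)
    (hindep : Pairwise ((IndepFun · · P) on Y)) (hident : ∀ n, IdentDistrib (Y n) (Y 0) P P) :
    ∀ᵐ ω ∂P, Tendsto (fun n : ℕ => Y n ω / n) atTop (𝓝 0) := by
  filter_upwards [strong_law_ae_real Y hint hindep hident] with ω hω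
  exact tendsto_div_natCast_of_tendsto_sum_div hω

variable {μ : Measure ℝ}

lemma map_comp_perm_eq_map {ι : Type*} [Fintype ι] {Y : ι → Ω → ℝ}
    (hmeas : ∀ i, Measurable (Y i)) (hindep : iIndepFun Y P) (hlaw : ∀ i, P.map (Y i) = μ)
    (e : Equiv.Perm ι) : P.map (fun ω i => Y (e i) ω) = P.map (fun ω i => Y i ω) := by
  rw [(hindep.precomp e.injective).map_fun_eq_pi_map fun i => (hmeas _).aemeasurable,
    hindep.map_fun_eq_pi_map fun i => (hmeas i).aemeasurable]
  simp only [hlaw]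

lemma measure_forall_lt_le_inv_card {ι : Type*} [Fintype ι] {Y : ι → Ω → ℝ}
    (hmeas : ∀ i, Measurable (Y i)) (hindep : iIndepFun Y P) (hlaw : ∀ i, P.map (Y i) = μ)
    (i₀ : ι) : P {ω | ∀ k ≠ i₀, Y k ω < Y i₀ ω} ≤ (Fintype.card ι : ℝ≥0∞)⁻¹ := by
  classical
  have := hindep.isProbabilityMeasure
  set E : ι → Set (ι → ℝ) := fun i => {y | ∀ k ≠ i, y k < y i}
  have hE : ∀ i, MeasurableSet (E i) := fun i => by
    simp only [E, Set.ofPred_forall]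
    exact .iInter fun k => .iInter fun _ =>
      measurableSet_lt (measurable_pi_apply k) (measurable_pi_apply i)
  have hYmeas : Measurable fun ω i => Y i ω := measurable_pi_lambda _ hmeas
  set A : ι → Set Ω := fun i => (fun ω k => Y k ω) ⁻¹' E i
  have hA_eq : ∀ i, P (A i) = P (A i₀) := fun i => by
    set e := Equiv.swap i₀ i
    have hAe : A i = (fun ω k => Y (e k) ω) ⁻¹' E i₀ := by
      ext ω
      simp only [A, E, Set.mem_preimage, Set.mem_ofPred_eq, e, Equiv.swap_apply_left]
      rw [← (Equiv.swap i₀ i).forall_congr_right]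
      simp only [ne_eq, Equiv.swap_apply_eq_iff, Equiv.swap_apply_right]
    rw [hAe, ← Measure.map_apply (measurable_pi_lambda _ fun k => hmeas (e k)) (hE i₀),
      map_comp_perm_eq_map hmeas hindep hlaw, Measure.map_apply hYmeas (hE i₀)]
  have hdisj : Set.PairwiseDisjoint (↑(univ : Finset ι)) A := fun i _ i' _ hii' =>
    Set.disjoint_left.2 fun ω hi hi' => (hi i' hii'.symm).not_gt (hi' i hii')
  have hsum : ∑ i, P (A i) ≤ 1 := by
    rw [← measure_biUnion_finset hdisj fun i _ => hYmeas (hE i)]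
    exact prob_le_one
  rw [sum_congr rfl fun i _ => hA_eq i, sum_const, card_univ, nsmul_eq_mul] at hsum
  exact ENNReal.le_inv_iff_mul_le.2 (by rwa [mul_comm])

lemma ae_exists_le_of_iIndepFun {Y : ℕ → Ω → ℝ} (hmeas : ∀ n, Measurable (Y n))
    (hindep : iIndepFun Y P) (hlaw : ∀ n, P.map (Y n) = μ) :
    ∀ᵐ ω ∂P, ∃ n, 1 ≤ n ∧ Y 0 ω ≤ Y n ω := by
  rw [ae_iff]
  refine le_zero_iff.1 (ge_of_tendsto'
    (ENNReal.tendsto_inv_nat_nhds_zero.comp (tendsto_add_atTop_nat 1)) fun n => ?_)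
  have hsub : {ω | ¬∃ n, 1 ≤ n ∧ Y 0 ω ≤ Y n ω} ⊆
      {ω | ∀ k : Fin (n + 1), k ≠ 0 → Y k ω < Y (0 : Fin (n + 1)) ω} := fun ω hω k hk => by
    simp only [Set.mem_ofPred_eq, not_exists, not_and, not_le] at hω
    exact hω k (Nat.one_le_iff_ne_zero.2 (Fin.val_ne_iff.2 hk))
  calc _ ≤ _ := measure_mono hsub
    _ ≤ _ := measure_forall_lt_le_inv_card (Y := fun k : Fin (n + 1) => Y k) (fun k => hmeas k)
        (hindep.precomp Fin.val_injective) (fun k => hlaw k) 0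
    _ = _ := by simp

end Probability

theorem statement17_general
    {Ω : Type} [MeasurableSpace Ω] (P : Measure Ω)
    (X : ℤ × ℤ → Ω → ℝ) (μ : Measure ℝ)
    (hmeas : ∀ u, Measurable (X u))
    (hindep : iIndepFun X P)
    (hlaw : ∀ u, Measure.map (X u) P = μ)
    (hmom : Integrable (fun x : ℝ => x) μ) (j : ℤ) :
    P {ω | ∀ u : ℤ, (Mset (fun p => X p ω) j u).Nonempty} = 1 := by
  have := hindep.isProbabilityMeasure
  have hrow : ∀ u : ℤ, ∀ᵐ ω ∂P, (Mset (fun p => X p ω) j u).Nonempty := fun u => by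
    set Y : ℕ → Ω → ℝ := fun r => X (u + r, j)
    have hYindep : iIndepFun Y P := hindep.precomp fun r s h => by simpa using h
    have hYlaw : ∀ r, P.map (Y r) = μ := fun r => hlaw _
    have hYint : Integrable (Y 0) P :=
      (integrable_map_measure aestronglyMeasurable_id (hmeas _).aemeasurable).1
        (by rw [hYlaw]; exact hmom)
    have hYident : ∀ r, IdentDistrib (Y r) (Y 0) P P := fun r =>
      ⟨(hmeas _).aemeasurable, (hmeas _).aemeasurable, by rw [hYlaw, hYlaw]⟩
    filter_upwards [ae_tendsto_div_natCast_of_identDistrib hYint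
        (fun r s hrs => hYindep.indepFun hrs) hYident,
      ae_exists_le_of_iIndepFun (fun r => hmeas _) hYindep hYlaw] with ω hlim hge
    exact Mset_nonempty_of_tendsto _ j u hlim (by simpa [Y] using hge)
  rw [measure_congr (ae_eq_univ.2 (ae_all_iff.2 hrow)), measure_univ]

theorem statement17
    {Ω : Type} [MeasurableSpace Ω] (P : Measure Ω) [IsProbabilityMeasure P]
    (X : ℤ × ℤ → Ω → ℝ) (μ : Measure ℝ) [IsProbabilityMeasure μ]
    (hmeas : ∀ u, Measurable (X u))
    (hindep : iIndepFun X P)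
    (hlaw : ∀ u, Measure.map (X u) P = μ)
    (hmom : Integrable (fun x : ℝ => x) μ) (j : ℤ) :
    P {ω | ∀ u : ℤ, (Mset (fun p => X p ω) j u).Nonempty} = 1 :=
  statement17_general P X μ hmeas hindep hlaw hmom j
end

section
/- Let X : ℤ² → ℝ be a random field whose entries are independent and identically distributed with common law μ, and suppose μ has a finite first moment, ∫ℝ |x| μ(dx) < ∞. Fix j ∈ ℤ, and on the almost sure event where for every u ∈ ℤ the set M(u) := {v > u : α_j(u) = τ_j(u,v)} is non-empty, let T(u) := min M(u). Then almost surely: (i) for every u ∈ ℤ, T(u) = min{v ∈ ℤ : v > u and α_j(v) ≤ α_j(u)}; and (ii) for all u, v ∈ ℤ with u < v < T(u), one has T(v) ≤ T(u). -/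
open MeasureTheory ProbabilityTheory
open scoped ENNReal

/-! Write `a = α_j(u)` and `g(w) = X(w, j) - a w`. Since every slope from `u` is at most `a`,
`g(w) ≤ g(u)` for all `w > u`, with equality at `T(u)` and strict inequality strictly between
`u` and `T(u)` by minimality of `T(u)`. Hence every slope from `T(u)` is at most `a`, i.e.
`α_j(T(u)) ≤ α_j(u)`, while for `u < v < T(u)` the slope from `v` to `T(u)` exceeds `a`, i.e.
`α_j(v) > α_j(u)`. Both claims follow. -/

section Slopes

variable (X : ℤ × ℤ → ℝ) (j : ℤ)

lemma coe_tauJ_le_alphaJ {u v : ℤ} (huv : u < v) : (tauJ X j u v : EReal) ≤ alphaJ X j u := by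
  lift v - u to ℕ using (sub_pos.2 huv).le with r hr
  have hv : v = u + r := by omega
  subst hv
  refine le_iSup₂_of_le (f := fun (r : ℕ) (_ : 1 ≤ r) =>
    (((X (u + r, j) - X (u, j)) / (r : ℝ) : ℝ) : EReal)) r (by omega) ?_
  simp [tauJ]

lemma alphaJ_le_coe {u : ℤ} {a : ℝ} (h : ∀ v, u < v → tauJ X j u v ≤ a) :
    alphaJ X j u ≤ a := by
  refine iSup₂_le fun r hr => ?_
  have := h (u + r) (by omega)
  rw [tauJ, add_sub_cancel_left] at this
  exact_mod_cast this

lemma tauJ_le_iff {u v : ℤ} (huv : u < v) (a : ℝ) :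
    tauJ X j u v ≤ a ↔ X (v, j) - a * v ≤ X (u, j) - a * u := by
  have hpos : (0 : ℝ) < ((v - u : ℤ) : ℝ) := by exact_mod_cast sub_pos.2 huv
  rw [tauJ, div_le_iff₀ hpos]
  push_cast
  constructor <;> intro h <;> linarith

lemma lt_tauJ_iff {u v : ℤ} (huv : u < v) (a : ℝ) :
    a < tauJ X j u v ↔ X (u, j) - a * u < X (v, j) - a * v := by
  simpa only [not_le] using (tauJ_le_iff X j huv a).not

lemma tauJ_eq_iff {u v : ℤ} (huv : u < v) (a : ℝ) :
    tauJ X j u v = a ↔ X (v, j) - a * v = X (u, j) - a * u := by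
  have hne : ((v - u : ℤ) : ℝ) ≠ 0 := by exact_mod_cast (sub_pos.2 huv).ne'
  rw [tauJ, div_eq_iff hne]
  push_cast
  constructor <;> intro h <;> linarith

variable {X j} {u t : ℤ}

lemma sub_mul_le_of_isLeast_Mset (ht : IsLeast (Mset X j u) t) {w : ℤ} (huw : u < w) :
    X (w, j) - tauJ X j u t * w ≤ X (u, j) - tauJ X j u t * u := by
  rw [← tauJ_le_iff X j huw, ← EReal.coe_le_coe_iff, ← ht.1.2]
  exact coe_tauJ_le_alphaJ X j huw

lemma sub_mul_lt_of_isLeast_Mset (ht : IsLeast (Mset X j u) t) {v : ℤ} (huv : u < v)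
    (hvt : v < t) :
    X (v, j) - tauJ X j u t * v < X (u, j) - tauJ X j u t * u := by
  refine (sub_mul_le_of_isLeast_Mset ht huv).lt_of_ne fun heq => hvt.not_ge (ht.2 ⟨huv, ?_⟩)
  rw [ht.1.2, (tauJ_eq_iff X j huv _).2 heq]

lemma alphaJ_le_of_isLeast_Mset (ht : IsLeast (Mset X j u) t) :
    alphaJ X j t ≤ alphaJ X j u := by
  have hut : u < t := ht.1.1
  have hgt := (tauJ_eq_iff X j hut _).1 rfl
  rw [ht.1.2]
  refine alphaJ_le_coe X j fun w htw => (tauJ_le_iff X j htw _).2 ?_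
  rw [hgt]
  exact sub_mul_le_of_isLeast_Mset ht (hut.trans htw)

lemma alphaJ_lt_of_isLeast_Mset (ht : IsLeast (Mset X j u) t) {v : ℤ} (huv : u < v)
    (hvt : v < t) : alphaJ X j u < alphaJ X j v := by
  have hgt := (tauJ_eq_iff X j ht.1.1 _).1 rfl
  calc alphaJ X j u = tauJ X j u t := ht.1.2
    _ < tauJ X j v t := by
      rw [EReal.coe_lt_coe_iff, lt_tauJ_iff X j hvt, hgt]
      exact sub_mul_lt_of_isLeast_Mset ht huv hvt
    _ ≤ alphaJ X j v := coe_tauJ_le_alphaJ X j hvt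

lemma isLeast_alphaJ_le_of_isLeast_Mset (ht : IsLeast (Mset X j u) t) :
    IsLeast {v | u < v ∧ alphaJ X j v ≤ alphaJ X j u} t :=
  ⟨⟨ht.1.1, alphaJ_le_of_isLeast_Mset ht⟩, fun _ ⟨huv, hv⟩ =>
    not_lt.1 fun hvt => hv.not_gt (alphaJ_lt_of_isLeast_Mset ht huv hvt)⟩

end Slopes

theorem statement18_general
    {Ω : Type} [MeasurableSpace Ω] (P : Measure Ω) [IsProbabilityMeasure P]
    (X : ℤ × ℤ → Ω → ℝ) (j : ℤ) :
    P {ω | ∀ T : ℤ → ℤ,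
        (∀ u : ℤ, IsLeast (Mset (fun p => X p ω) j u) (T u)) →
        ((∀ u : ℤ, IsLeast
            {v : ℤ | u < v ∧
              alphaJ (fun p => X p ω) j v ≤ alphaJ (fun p => X p ω) j u} (T u)) ∧
          (∀ u v : ℤ, u < v → v < T u → T v ≤ T u))} = 1 := by
  convert measure_univ (μ := P)
  refine Set.eq_univ_of_forall fun ω T hT => ⟨fun u => isLeast_alphaJ_le_of_isLeast_Mset (hT u),
    fun u v huv hvt => (isLeast_alphaJ_le_of_isLeast_Mset (hT v)).2 ⟨hvt, ?_⟩⟩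
  exact (alphaJ_le_of_isLeast_Mset (hT u)).trans (alphaJ_lt_of_isLeast_Mset (hT u) huv hvt).le

theorem statement18
    {Ω : Type} [MeasurableSpace Ω] (P : Measure Ω) [IsProbabilityMeasure P]
    (X : ℤ × ℤ → Ω → ℝ) (μ : Measure ℝ) [IsProbabilityMeasure μ]
    (hmeas : ∀ u, Measurable (X u))
    (hindep : iIndepFun X P)
    (hlaw : ∀ u, Measure.map (X u) P = μ)
    (hmom : Integrable (fun x : ℝ => x) μ) (j : ℤ) :
    P {ω | ∀ T : ℤ → ℤ,
        (∀ u : ℤ, IsLeast (Mset (fun p => X p ω) j u) (T u)) →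
        ((∀ u : ℤ, IsLeast
            {v : ℤ | u < v ∧
              alphaJ (fun p => X p ω) j v ≤ alphaJ (fun p => X p ω) j u} (T u)) ∧
          (∀ u v : ℤ, u < v → v < T u → T v ≤ T u))} = 1 :=
  statement18_general P X j
end

section
/- There exists a deterministic map Ψ : (ℝ∪{±∞})^{ℤ²} → ℝ^{ℤ²} such that the following holds: for every random field X : ℤ² → ℝ whose entries are independent and identically distributed with common law μ having a finite first moment ∫ℝ |x| μ(dx) < ∞, one has P(Ψ(Φ(X)) = X − μ̄·𝟙) = 1, where μ̄ := ∫ℝ x μ(dx) is the first moment of μ and 𝟙 ∈ ℝ^{ℤ²} is the constant function equal to 1. -/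
/-!
Along a row `a : ℤ → ℝ`, `Φ` records `s k = sup_{j > k} (a j - a k) / (j - k)`. For an i.i.d. row
with finite mean, almost surely the chord slopes tend to `0` (strong law of large numbers), and a
value that dominates everything to its right recurs to its right (essential supremum and the second
Borel–Cantelli lemma); so each supremum is attained. If `j` is the first point after `k` with
`s j ≤ s k`, that maximum is attained exactly at `j`, so `a j - a k = (j - k) * s k` is read off
from `s`. For two such rows with the same `s`, the difference therefore agrees at every point and
its first descent, and chaining first descents makes it constant; the strong law identifies the
constant through the means.
-/

open MeasureTheory ProbabilityTheory
open scoped ENNReal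

/-- The deterministic map `Φ` sending a height function `X : ℤ² → ℝ` to the field
`Φ(X)(u) = sup_{r ≥ 1} (X(u + r e₁) - X(u)) / r`, valued in `EReal = ℝ ∪ {±∞}`. -/
noncomputable def PhiMap (X : ℤ × ℤ → ℝ) (u : ℤ × ℤ) : EReal :=
  ⨆ (r : ℕ) (_ : 1 ≤ r), (((X (u.1 + (r : ℤ), u.2) - X u) / (r : ℝ) : ℝ) : EReal)

open Filter Finset Topology

lemma tendsto_div_add_one_of_tendsto_cesaro {w : ℕ → ℝ} {m : ℝ}
    (h : Tendsto (fun n : ℕ => (∑ i ∈ range n, w i) / n) atTop (𝓝 m)) :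
    Tendsto (fun n : ℕ => w n / (n + 1)) atTop (𝓝 0) := by
  have hratio : Tendsto (fun n : ℕ => (n : ℝ) / (n + 1)) atTop (𝓝 1) :=
    tendsto_natCast_div_add_atTop 1
  have hdiff := (h.comp (tendsto_add_atTop_nat 1)).sub (h.mul hratio)
  rw [mul_one, sub_self] at hdiff
  refine hdiff.congr fun n => ?_
  rcases n.eq_zero_or_pos with rfl | hn
  · simp
  · have : (n : ℝ) ≠ 0 := (Nat.cast_pos.2 hn).ne'
    simp only [Function.comp_apply, sum_range_succ]
    push_cast
    field_simp
    ring

lemma eq_add_of_tendsto_cesaro_add_const {w : ℕ → ℝ} {m m' c : ℝ}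
    (h : Tendsto (fun n : ℕ => (∑ i ∈ range n, w i) / n) atTop (𝓝 m))
    (h' : Tendsto (fun n : ℕ => (∑ i ∈ range n, (w i + c)) / n) atTop (𝓝 m')) :
    m' = m + c := by
  refine tendsto_nhds_unique h' ((h.add_const c).congr' ?_)
  filter_upwards [eventually_ne_atTop 0] with n hn
  have : (n : ℝ) ≠ 0 := Nat.cast_ne_zero.2 hn
  rw [sum_add_distrib, sum_const, card_range, nsmul_eq_mul]
  field_simp

lemma exists_eq_ciSup_of_tendsto_zero {f : ℕ → ℝ} (hf : Tendsto f atTop (𝓝 0))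
    {n₀ : ℕ} (hn₀ : 0 < f n₀) : ∃ n, f n = ⨆ n, f n := by
  obtain ⟨n, hn⟩ := continuous_of_discreteTopology.exists_forall_ge' n₀ <| by
    rw [cocompact_eq_atTop]
    exact hf.eventually (ge_mem_nhds hn₀)
  exact ⟨n, le_antisymm (le_ciSup hf.bddAbove_range n) (ciSup_le hn)⟩

section FirstDescent

variable {α β : Type*} [LinearOrder α] {y : ℤ → α} {D : ℤ → β}

lemma exists_first_descent {i j : ℤ} (hij : i < j) (hj : y j ≤ y i) :
    ∃ j', i < j' ∧ j' ≤ j ∧ y j' ≤ y i ∧ ∀ t, i < t → t < j' → y i < y t := by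
  obtain ⟨j', ⟨hij', hj'⟩, hmin⟩ := Int.exists_least_of_bdd
    (P := fun t => i < t ∧ y t ≤ y i) ⟨i, fun _ ht => ht.1.le⟩ ⟨j, hij, hj⟩
  exact ⟨j', hij', hmin j ⟨hij, hj⟩, hj',
    fun t hit htj' => lt_of_not_ge fun h => (hmin t ⟨hit, h⟩).not_gt htj'⟩

variable (hD : ∀ k j, k < j → y j ≤ y k → (∀ t, k < t → t < j → y k < y t) → D j = D k)
include hD

lemma eq_of_forall_le_right_end {i j : ℤ} (hij : i < j) (hle : ∀ t, i ≤ t → t < j → y j ≤ y t) :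
    D j = D i := by
  induction hn : (j - i).toNat using Nat.strong_induction_on generalizing i with
  | _ n ih =>
    obtain ⟨j', hij', hj'j, hj', hfirst⟩ := exists_first_descent hij (hle i le_rfl hij)
    rw [← hD i j' hij' hj' hfirst]
    rcases hj'j.eq_or_lt with rfl | hj'j
    · rfl
    · exact ih _ (by omega) hj'j (fun t ht htj => hle t (by omega) htj) rfl

lemma periodic_of_eq_at_first_descents (hdesc : ∀ k, ∃ j, k < j ∧ y j ≤ y k) :
    Function.Periodic D 1 := by
  intro k
  obtain ⟨j₀, hkj₀, hj₀⟩ := hdesc k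
  obtain ⟨j, hkj, -, hj, hfirst⟩ := exists_first_descent hkj₀ hj₀
  rw [← hD k j hkj hj hfirst]
  rcases (show k + 1 ≤ j by omega).eq_or_lt with hj1 | hj1
  · rw [hj1]
  · exact (eq_of_forall_le_right_end hD hj1 fun t ht htj =>
      hj.trans (hfirst t (by omega) htj).le).symm

end FirstDescent

noncomputable def slopeSup (a : ℤ → ℝ) (k : ℤ) : ℝ :=
  ⨆ r : ℕ, (a (k + r + 1) - a k) / (r + 1)

section SlopeSup

variable {a : ℤ → ℝ}
  (hslope : ∀ k, Tendsto (fun r : ℕ => (a (k + r + 1) - a k) / (r + 1)) atTop (𝓝 0))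
include hslope

lemma sub_le_mul_slopeSup {k j : ℤ} (hkj : k < j) : a j - a k ≤ (j - k) * slopeSup a k := by
  obtain ⟨r, rfl⟩ : ∃ r : ℕ, j = k + r + 1 := ⟨(j - k - 1).toNat, by omega⟩
  have h : _ ≤ slopeSup a k := le_ciSup (hslope k).bddAbove_range r
  rw [div_le_iff₀ (by positivity)] at h
  push_cast
  linarith

lemma slopeSup_le_of_sub_eq {k j : ℤ} (hkj : k < j) (htight : a j - a k = (j - k) * slopeSup a k) :
    slopeSup a j ≤ slopeSup a k := by
  refine ciSup_le fun r => (div_le_iff₀ (by positivity)).2 ?_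
  have := sub_le_mul_slopeSup hslope (show k < j + r + 1 by omega)
  push_cast at this
  linarith

variable (hrec : ∀ k, (∀ j, k < j → a j ≤ a k) → ∃ j, k < j ∧ a j = a k)
include hrec

lemma exists_sub_eq_mul_slopeSup (k : ℤ) : ∃ j, k < j ∧ a j - a k = (j - k) * slopeSup a k := by
  by_cases hpos : ∃ r : ℕ, 0 < (a (k + r + 1) - a k) / (r + 1)
  · obtain ⟨r₀, hr₀⟩ := hpos
    obtain ⟨r, hr⟩ := exists_eq_ciSup_of_tendsto_zero (hslope k) hr₀
    refine ⟨k + r + 1, by omega, ?_⟩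
    rw [slopeSup, ← hr]
    field_simp
    push_cast
    ring
  · push Not at hpos
    have hsup : ∀ j : ℤ, k < j → (j - k) * slopeSup a k ≤ 0 := fun j hkj =>
      mul_nonpos_of_nonneg_of_nonpos (by rw [sub_nonneg]; exact_mod_cast hkj.le) (ciSup_le hpos)
    obtain ⟨j, hkj, hj⟩ := hrec k fun j hkj =>
      sub_nonpos.1 ((sub_le_mul_slopeSup hslope hkj).trans (hsup j hkj))
    refine ⟨j, hkj, le_antisymm (sub_le_mul_slopeSup hslope hkj) ?_⟩
    rw [hj, sub_self]
    exact hsup j hkj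

lemma sub_eq_mul_slopeSup_of_first_descent {k j : ℤ} (hkj : k < j)
    (hj : slopeSup a j ≤ slopeSup a k) (hfirst : ∀ t, k < t → t < j → slopeSup a k < slopeSup a t) :
    a j - a k = (j - k) * slopeSup a k := by
  obtain ⟨l, hkl, hl⟩ := exists_sub_eq_mul_slopeSup hslope hrec k
  have hjl : j ≤ l := not_lt.1 fun hlj =>
    (slopeSup_le_of_sub_eq hslope hkl hl).not_gt (hfirst l hkl hlj)
  rcases hjl.eq_or_lt with rfl | hjl
  · exact hl
  · have h₁ := sub_le_mul_slopeSup hslope hkj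
    have h₂ := sub_le_mul_slopeSup hslope hjl
    have h₃ : (l - j) * slopeSup a j ≤ (l - j) * slopeSup a k :=
      mul_le_mul_of_nonneg_left hj (by rw [sub_nonneg]; exact_mod_cast hjl.le)
    linarith

end SlopeSup

lemma periodic_sub_of_slopeSup_eq {a b : ℤ → ℝ}
    (ha : ∀ k, Tendsto (fun r : ℕ => (a (k + r + 1) - a k) / (r + 1)) atTop (𝓝 0))
    (ha' : ∀ k, (∀ j, k < j → a j ≤ a k) → ∃ j, k < j ∧ a j = a k)
    (hb : ∀ k, Tendsto (fun r : ℕ => (b (k + r + 1) - b k) / (r + 1)) atTop (𝓝 0))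
    (hb' : ∀ k, (∀ j, k < j → b j ≤ b k) → ∃ j, k < j ∧ b j = b k)
    (h : slopeSup b = slopeSup a) : Function.Periodic (b - a) 1 := by
  refine periodic_of_eq_at_first_descents (y := slopeSup a)
    (fun k j hkj hj hfirst => ?_) fun k => ?_
  · have hja := sub_eq_mul_slopeSup_of_first_descent ha ha' hkj hj hfirst
    have hjb := sub_eq_mul_slopeSup_of_first_descent hb hb' hkj (h ▸ hj) (h ▸ hfirst)
    rw [h] at hjb
    simp only [Pi.sub_apply]
    linarith
  · obtain ⟨j, hkj, hj⟩ := exists_sub_eq_mul_slopeSup ha ha' k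
    exact ⟨j, hkj, slopeSup_le_of_sub_eq ha hkj hj⟩

structure IsTypicalRow (a : ℤ → ℝ) (m : ℝ) : Prop where
  tendsto_cesaro : ∀ k : ℤ, Tendsto (fun n : ℕ => (∑ i ∈ range n, a (k + i + 1)) / n) atTop (𝓝 m)
  exists_eq_of_forall_le : ∀ k, (∀ j, k < j → a j ≤ a k) → ∃ j, k < j ∧ a j = a k

namespace IsTypicalRow

variable {a b : ℤ → ℝ} {m m' : ℝ}

lemma tendsto_slope (ha : IsTypicalRow a m) (k : ℤ) :
    Tendsto (fun r : ℕ => (a (k + r + 1) - a k) / (r + 1)) atTop (𝓝 0) := by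
  have h := (tendsto_div_add_one_of_tendsto_cesaro (ha.tendsto_cesaro k)).sub
    (tendsto_one_div_add_atTop_nhds_zero_nat.const_mul (a k))
  rw [mul_zero, sub_zero] at h
  exact h.congr fun r => by ring

lemma sub_eq_of_slopeSup_eq (ha : IsTypicalRow a m) (hb : IsTypicalRow b m')
    (h : slopeSup b = slopeSup a) (k : ℤ) : b k - m' = a k - m := by
  have hper := periodic_sub_of_slopeSup_eq ha.tendsto_slope ha.exists_eq_of_forall_le
    hb.tendsto_slope hb.exists_eq_of_forall_le h
  have hb_eq : ∀ k, b k = a k + (b 0 - a 0) := fun k => by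
    have := hper.int_mul_eq k
    simp only [Int.cast_id, mul_one, Pi.sub_apply] at this
    linarith
  have hm : m' = m + (b 0 - a 0) := eq_add_of_tendsto_cesaro_add_const (ha.tendsto_cesaro 0) <| by
    simpa only [← hb_eq] using hb.tendsto_cesaro 0
  rw [hb_eq k, hm]
  ring

end IsTypicalRow

def IsTypicalField (Z : ℤ × ℤ → ℝ) (m : ℝ) : Prop :=
  ∀ j, IsTypicalRow (fun k => Z (k, j)) m

lemma PhiMap_eq_slopeSup {Z : ℤ × ℤ → ℝ} {j : ℤ}
    (hslope : ∀ k, Tendsto (fun r : ℕ => (Z (k + r + 1, j) - Z (k, j)) / (r + 1)) atTop (𝓝 0))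
    (k : ℤ) : PhiMap Z (k, j) = slopeSup (fun k => Z (k, j)) k := by
  have hcoe : Monotone ((↑) : ℝ → EReal) := fun _ _ => EReal.coe_le_coe
  rw [slopeSup, hcoe.map_ciSup_of_continuousAt continuous_coe_real_ereal.continuousAt
    (hslope k).bddAbove_range, PhiMap]
  refine (iSup_ge_eq_iSup_nat_add
    (fun r : ℕ => (((Z (k + r, j) - Z (k, j)) / r : ℝ) : EReal)) 1).trans ?_
  push_cast
  simp only [add_assoc]

open Classical in
noncomputable def PsiMap (Y : ℤ × ℤ → EReal) : ℤ × ℤ → ℝ :=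
  if h : ∃ p : (ℤ × ℤ → ℝ) × ℝ, IsTypicalField p.1 p.2 ∧ PhiMap p.1 = Y then
    fun u => h.choose.1 u - h.choose.2
  else 0

lemma IsTypicalField.sub_eq_of_PhiMap_eq {Z Z' : ℤ × ℤ → ℝ} {m m' : ℝ}
    (hZ : IsTypicalField Z m) (hZ' : IsTypicalField Z' m') (h : PhiMap Z' = PhiMap Z)
    (u : ℤ × ℤ) : Z' u - m' = Z u - m := by
  obtain ⟨k, j⟩ := u
  refine (hZ j).sub_eq_of_slopeSup_eq (hZ' j) (funext fun k => ?_) k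
  have := congrFun h (k, j)
  rwa [PhiMap_eq_slopeSup (hZ' j).tendsto_slope, PhiMap_eq_slopeSup (hZ j).tendsto_slope,
    EReal.coe_eq_coe_iff] at this

lemma PsiMap_PhiMap {Z : ℤ × ℤ → ℝ} {m : ℝ} (hZ : IsTypicalField Z m) :
    PsiMap (PhiMap Z) = fun u => Z u - m := by
  have h : ∃ p : (ℤ × ℤ → ℝ) × ℝ, IsTypicalField p.1 p.2 ∧ PhiMap p.1 = PhiMap Z :=
    ⟨(Z, m), hZ, rfl⟩
  rw [PsiMap, dif_pos h]
  exact funext (hZ.sub_eq_of_PhiMap_eq h.choose_spec.1 h.choose_spec.2)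

section IID

variable {Ω : Type*} [MeasurableSpace Ω] {P : Measure Ω} {ξ : ℕ → Ω → ℝ} {μ : Measure ℝ}
  (hξ : ∀ r, Measurable (ξ r)) (hind : iIndepFun ξ P) (hlaw : ∀ r, P.map (ξ r) = μ)
include hξ hind hlaw

lemma ae_tendsto_cesaro_integral (hint : Integrable id μ) :
    ∀ᵐ ω ∂P, Tendsto (fun n : ℕ => (∑ i ∈ range n, ξ i ω) / n) atTop (𝓝 (∫ x, x ∂μ)) := by
  have hid : IdentDistrib (ξ 0) id P μ :=
    ⟨(hξ 0).aemeasurable, aemeasurable_id, by rw [hlaw, Measure.map_id]⟩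
  have h := strong_law_ae_real ξ (hid.integrable_iff.2 hint)
    (fun i j hij => hind.indepFun hij)
    (fun i => ⟨(hξ i).aemeasurable, (hξ 0).aemeasurable, by rw [hlaw, hlaw]⟩)
  rwa [hid.integral_eq] at h

lemma ae_exists_mem_of_measure_ne_zero {s : Set ℝ} (hs : MeasurableSet s) (hμs : μ s ≠ 0) :
    ∀ᵐ ω ∂P, ∃ r, ξ r ω ∈ s := by
  have hmeas : ∀ r, MeasurableSet (ξ r ⁻¹' s) := fun r => hξ r hs
  have hP : ∀ r, P (ξ r ⁻¹' s) = μ s := fun r => by rw [← hlaw r, Measure.map_apply (hξ r) hs]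
  have hlimsup := measure_limsup_eq_one hmeas
    ((iIndepSet_iff_meas_biInter hmeas).2 fun S => hind.measure_inter_preimage_eq_mul S
      fun _ _ => hs)
    (by simp_rw [hP]; exact ENNReal.tsum_const_eq_top_of_ne_zero hμs)
  have : IsProbabilityMeasure P := hind.isProbabilityMeasure
  refine ((ae_mem_iff_measure_eq (MeasurableSet.iUnion hmeas).nullMeasurableSet).2 ?_).mono
    fun ω hω => Set.mem_iUnion.1 hω
  rw [measure_univ]
  exact le_antisymm prob_le_one <| hlimsup ▸ measure_mono fun ω hω =>
    Set.mem_iUnion.2 (mem_limsup_iff_frequently_mem.1 hω).exists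

lemma ae_exists_eq_of_forall_le {Y : Ω → ℝ} (hY : Measurable Y) (hYlaw : P.map Y = μ) :
    ∀ᵐ ω ∂P, (∀ r, ξ r ω ≤ Y ω) → ∃ r, ξ r ω = Y ω := by
  set M := essSup ((↑) : ℝ → EReal) μ
  have hY_le : ∀ᵐ ω ∂P, (Y ω : EReal) ≤ M :=
    ae_of_ae_map hY.aemeasurable (by rw [hYlaw]; exact ae_le_essSup (f := ((↑) : ℝ → EReal)))
  have hexceed : ∀ᵐ ω ∂P, ∀ q : ℚ, ((q : ℝ) : EReal) < M → ∃ r, (q : ℝ) < ξ r ω := by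
    refine ae_all_iff.2 fun q => ?_
    by_cases hq : ((q : ℝ) : EReal) < M
    · have hμq : μ (Set.Ioi (q : ℝ)) ≠ 0 := fun h0 => hq.not_ge <|
        essSup_le_of_ae_le _ <| (measure_eq_zero_iff_ae_notMem.1 h0).mono fun x hx =>
          EReal.coe_le_coe_iff.2 (not_lt.1 hx)
      filter_upwards [ae_exists_mem_of_measure_ne_zero hξ hind hlaw measurableSet_Ioi hμq]
        with ω hω _ using hω
    · exact Eventually.of_forall fun ω h => absurd h hq
  have hattain : ∀ᵐ ω ∂P, (Y ω : EReal) = M → ∃ r, ξ r ω = Y ω := by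
    -- `T` is `{M}` when `M` is finite and empty otherwise
    set T := {x : ℝ | (x : EReal) = M}
    have hT : MeasurableSet T := measurable_coe_real_ereal (measurableSet_singleton M)
    by_cases hμT : μ T = 0
    · filter_upwards [ae_of_ae_map hY.aemeasurable
        (by rw [hYlaw]; exact measure_eq_zero_iff_ae_notMem.1 hμT)] with ω hω hM using absurd hM hω
    · filter_upwards [ae_exists_mem_of_measure_ne_zero hξ hind hlaw hT hμT]
        with ω ⟨r, hr⟩ hM using ⟨r, EReal.coe_injective (hr.trans hM.symm)⟩
  filter_upwards [hY_le, hexceed, hattain] with ω hle hexc hatt hξY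
  refine hatt (hle.eq_of_not_lt fun hlt => ?_)
  obtain ⟨q, hYq, hqM⟩ := EReal.exists_rat_btwn_of_lt hlt
  obtain ⟨r, hr⟩ := hexc q hqM
  exact (hξY r).not_gt (hr.trans' (EReal.coe_lt_coe_iff.1 hYq))

end IID

lemma ae_isTypicalField {Ω : Type*} [MeasurableSpace Ω] {P : Measure Ω} {X : ℤ × ℤ → Ω → ℝ}
    {μ : Measure ℝ} (hX : ∀ u, Measurable (X u)) (hind : iIndepFun X P)
    (hlaw : ∀ u, P.map (X u) = μ) (hint : Integrable id μ) :
    ∀ᵐ ω ∂P, IsTypicalField (fun u => X u ω) (∫ x, x ∂μ) := by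
  have hray (u : ℤ × ℤ) : Function.Injective fun r : ℕ => (u.1 + r + 1, u.2) := fun r s h => by
    simp only [Prod.mk.injEq] at h
    omega
  have hcesaro : ∀ᵐ ω ∂P, ∀ u : ℤ × ℤ, Tendsto
      (fun n : ℕ => (∑ i ∈ range n, X (u.1 + i + 1, u.2) ω) / n) atTop (𝓝 (∫ x, x ∂μ)) :=
    ae_all_iff.2 fun u => ae_tendsto_cesaro_integral (fun _ => hX _) (hind.precomp (hray u))
      (fun _ => hlaw _) hint
  have hrecur : ∀ᵐ ω ∂P, ∀ u : ℤ × ℤ, (∀ r : ℕ, X (u.1 + r + 1, u.2) ω ≤ X u ω) →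
      ∃ r : ℕ, X (u.1 + r + 1, u.2) ω = X u ω :=
    ae_all_iff.2 fun u => ae_exists_eq_of_forall_le (fun _ => hX _) (hind.precomp (hray u))
      (fun _ => hlaw _) (hX u) (hlaw u)
  filter_upwards [hcesaro, hrecur] with ω hc hr j
  refine ⟨fun k => hc (k, j), fun k hle => ?_⟩
  obtain ⟨r, hr⟩ := hr (k, j) fun r => hle _ (by omega)
  exact ⟨k + r + 1, by omega, hr⟩

theorem statement19 :
    ∃ Ψ : ((ℤ × ℤ) → EReal) → ((ℤ × ℤ) → ℝ),
      ∀ (Ω : Type) [MeasurableSpace Ω] (P : Measure Ω),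
        IsProbabilityMeasure P →
        ∀ (X : ℤ × ℤ → Ω → ℝ) (μ : Measure ℝ), IsProbabilityMeasure μ →
          (∀ u, Measurable (X u)) →
          iIndepFun X P →
          (∀ u, Measure.map (X u) P = μ) →
          Integrable (fun x : ℝ => x) μ →
          P {ω | Ψ (PhiMap (fun v => X v ω)) =
                 fun u => X u ω - ∫ x, x ∂μ} = 1 := by
  refine ⟨PsiMap, fun Ω _ P _ X μ _ hX hind hlaw hint => ?_⟩
  have hgood : ∀ᵐ ω ∂P, PsiMap (PhiMap fun v => X v ω) = fun u => X u ω - ∫ x, x ∂μ :=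
    (ae_isTypicalField hX hind hlaw hint).mono fun ω hω => PsiMap_PhiMap hω
  exact (measure_congr (ae_eq_univ.2 (ae_iff.1 hgood))).trans measure_univ
end
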